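/- Let A₁₆ be the 16 × 16 real matrix with entries (A₁₆)_{11} = 2, (A₁₆)_{ii} = 1 for 2 ≤ i ≤ 15, (A₁₆)_{i,i+1} = −1 for 1 ≤ i ≤ 14, (A₁₆)_{i,16} = 1/2 for 1 ≤ i ≤ 16, and 0 otherwise; let A₈ be the analogous 8 × 8 matrix and A₈ₓ₈ the 16 × 16 block-diagonal matrix with two copies of A₈. Then the lattices A₁₆·ℤ¹⁶ and A₈ₓ₈·ℤ¹⁶ are not congruent: there is no orthogonal 16 × 16 real matrix B such that B·(A₁₆·ℤ¹⁶) = A₈ₓ₈·ℤ¹⁶. Consequently, the associated flat tori ℝ¹⁶/(A₁₆ℤ¹⁶) and ℝ¹⁶/(A₈ₓ₈ℤ¹⁶) are not isometric. -/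

import Mathlib

/-!
Call a lattice root-generated if it is spanned over `ℤ` by its roots, the vectors `v` with
`v ⬝ᵥ v = 2`; orthogonal maps preserve this property. `E₈` is root-generated, hence so is
`E₈ × E₈`. In `E₁₆` every vector has either all coordinates in `ℤ` or all in `ℤ + ½`, and a
vector of the second kind has `v ⬝ᵥ v ≥ 16 / 4 = 4`. So the roots of `E₁₆` span a sublattice
of `ℤ¹⁶`, which misses the basis vector `(½, …, ½)` of `E₁₆`.
-/

open Matrix

/-- The basis matrix `A_n` of the lattice `E_n` (for `n = 8, 16`):
`(A)_{11} = 2`, `(A)_{ii} = 1` for `2 ≤ i ≤ n−1`, `(A)_{i,i+1} = −1` for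
`1 ≤ i ≤ n−2`, `(A)_{i,n} = 1/2` for all `i`, and `0` otherwise (1-based indices). -/
noncomputable def milnorBasisMatrix (n : ℕ) : Matrix (Fin n) (Fin n) ℝ :=
  Matrix.of fun i j =>
    if (j : ℕ) = n - 1 then 1 / 2
    else if (i : ℕ) = 0 ∧ (j : ℕ) = 0 then 2
    else if (i : ℕ) = (j : ℕ) then 1
    else if (j : ℕ) = (i : ℕ) + 1 then -1
    else 0

/-- The basis matrix of `E₈ × E₈`: block diagonal with two copies of `A₈`. -/
noncomputable def milnorBasisMatrix8x8 : Matrix (Fin 16) (Fin 16) ℝ :=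
  Matrix.reindex finSumFinEquiv finSumFinEquiv
    (Matrix.fromBlocks (milnorBasisMatrix 8) 0 0 (milnorBasisMatrix 8))

variable {m n : Type*}

def matrixLattice (A : Matrix m n ℝ) : Submodule ℤ (m → ℝ) :=
  Submodule.span ℤ (Set.range A.col)

lemma coe_matrixLattice [Fintype n] (A : Matrix m n ℝ) :
    (matrixLattice A : Set (m → ℝ)) = {v | ∃ k : n → ℤ, v = A *ᵥ fun j => (k j : ℝ)} := by
  ext v
  rw [SetLike.mem_coe, matrixLattice, Submodule.mem_span_range_iff_exists_fun]
  simp only [Set.mem_ofPred_eq, mulVec_eq_sum, op_smul_eq_smul, Int.cast_smul_eq_zsmul]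
  exact exists_congr fun k => eq_comm

lemma matrixLattice_reindex (e : m ≃ n) (A : Matrix m m ℝ) :
    matrixLattice (reindex e e A) = (matrixLattice A).map (LinearMap.funLeft ℤ ℝ e.symm) := by
  have hcol : (reindex e e A).col = (LinearMap.funLeft ℤ ℝ e.symm ∘ A.col) ∘ e.symm := rfl
  rw [matrixLattice, matrixLattice, Submodule.map_span, ← Set.range_comp, hcol,
    e.symm.surjective.range_comp]

def sumElimZero : (m → ℝ) →ₗ[ℤ] (m ⊕ n → ℝ) :=
  (LinearEquiv.sumArrowLequivProdArrow m n ℤ ℝ).symm.toLinearMap ∘ₗ LinearMap.inl ℤ _ _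

def zeroSumElim : (n → ℝ) →ₗ[ℤ] (m ⊕ n → ℝ) :=
  (LinearEquiv.sumArrowLequivProdArrow m n ℤ ℝ).symm.toLinearMap ∘ₗ LinearMap.inr ℤ _ _

lemma matrixLattice_fromBlocks (A : Matrix m m ℝ) (D : Matrix n n ℝ) :
    matrixLattice (fromBlocks A 0 0 D) =
      (matrixLattice A).map sumElimZero ⊔ (matrixLattice D).map zeroSumElim := by
  rw [matrixLattice, matrixLattice, matrixLattice, Submodule.map_span, Submodule.map_span,
    ← Submodule.span_union, ← Set.range_comp, ← Set.range_comp, ← Set.Sum.elim_range]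
  congr 2
  ext (i | i) (j | j) <;> rfl

section Roots

variable [Fintype m] [Fintype n]

def rootSpan (L : Submodule ℤ (n → ℝ)) : Submodule ℤ (n → ℝ) :=
  Submodule.span ℤ {v | v ∈ L ∧ v ⬝ᵥ v = 2}

def IsRootGenerated (L : Submodule ℤ (n → ℝ)) : Prop :=
  L ≤ rootSpan L

lemma rootSpan_mono {L L' : Submodule ℤ (n → ℝ)} (h : L ≤ L') : rootSpan L ≤ rootSpan L' :=
  Submodule.span_mono fun _ hv => ⟨h hv.1, hv.2⟩

lemma IsRootGenerated.sup {L L' : Submodule ℤ (n → ℝ)} (h : IsRootGenerated L)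
    (h' : IsRootGenerated L') : IsRootGenerated (L ⊔ L') :=
  sup_le (h.trans (rootSpan_mono le_sup_left)) (h'.trans (rootSpan_mono le_sup_right))

lemma IsRootGenerated.map {L : Submodule ℤ (m → ℝ)} (hL : IsRootGenerated L)
    (φ : (m → ℝ) →ₗ[ℤ] (n → ℝ)) (hφ : ∀ x, φ x ⬝ᵥ φ x = x ⬝ᵥ x) :
    IsRootGenerated (L.map φ) := by
  refine (Submodule.map_mono hL).trans ?_
  rw [rootSpan, Submodule.map_span]
  refine Submodule.span_mono ?_
  rintro _ ⟨v, ⟨hv, hv2⟩, rfl⟩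
  exact ⟨Submodule.mem_map_of_mem hv, (hφ v).trans hv2⟩

lemma IsRootGenerated.reindex (e : m ≃ n) {A : Matrix m m ℝ}
    (h : IsRootGenerated (matrixLattice A)) : IsRootGenerated (matrixLattice (reindex e e A)) := by
  rw [matrixLattice_reindex]
  refine h.map _ fun x => ?_
  simp only [dotProduct, LinearMap.funLeft_apply]
  exact e.symm.sum_comp fun i => x i * x i

lemma IsRootGenerated.fromBlocks {A : Matrix m m ℝ} {D : Matrix n n ℝ}
    (hA : IsRootGenerated (matrixLattice A)) (hD : IsRootGenerated (matrixLattice D)) :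
    IsRootGenerated (matrixLattice (fromBlocks A 0 0 D)) := by
  rw [matrixLattice_fromBlocks]
  exact (hA.map _ fun x => by simp [sumElimZero, dotProduct]).sup
    (hD.map _ fun x => by simp [zeroSumElim, dotProduct])

lemma dotProduct_mulVec_mulVec_self [DecidableEq n] {B : Matrix n n ℝ} (hB : Bᵀ * B = 1)
    (x : n → ℝ) : B *ᵥ x ⬝ᵥ B *ᵥ x = x ⬝ᵥ x := by
  rw [dotProduct_mulVec, ← mulVec_transpose, mulVec_mulVec, hB, one_mulVec]

lemma IsRootGenerated.of_image_mulVec [DecidableEq n] {B : Matrix n n ℝ}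
    (hB : Bᵀ * B = 1) {L L' : Submodule ℤ (n → ℝ)} (h : IsRootGenerated L')
    (himg : (fun v => B *ᵥ v) '' L = L') : IsRootGenerated L := by
  have hL : L = L'.map (Bᵀ.mulVecLin.restrictScalars ℤ) := by
    refine SetLike.coe_injective ?_
    have hinv : ∀ v, Bᵀ.mulVecLin.restrictScalars ℤ (B *ᵥ v) = v := fun v => by
      simp only [LinearMap.restrictScalars_apply, mulVecLin_apply, mulVec_mulVec, hB, one_mulVec]
    rw [Submodule.map_coe, ← himg, Set.image_image]
    simp only [hinv, Set.image_id']
  have hBt : Bᵀᵀ * Bᵀ = 1 := by rw [transpose_transpose, mul_eq_one_comm, hB]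
  rw [hL]
  exact h.map _ (dotProduct_mulVec_mulVec_self hBt)

end Roots

lemma one_le_sq_intCast_of_odd {z : ℤ} (hz : Odd z) : (1 : ℝ) ≤ (z : ℝ) ^ 2 := by
  have hz0 : z ≠ 0 := by rintro rfl; simp at hz
  exact_mod_cast (one_le_sq_iff_one_le_abs _).2 (Int.one_le_abs hz0)

/-- `(1 : Submodule ℤ ℝ)` is the image of `ℤ` in `ℝ`. -/
def intVectors (n : Type*) : Submodule ℤ (n → ℝ) :=
  Submodule.pi Set.univ fun _ => 1

lemma mem_intVectors {v : n → ℝ} : v ∈ intVectors n ↔ ∀ i, ∃ z : ℤ, (z : ℝ) = v i := by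
  simp [intVectors, Submodule.mem_pi, Submodule.mem_one]

lemma mem_intVectors_of_four_mul_dotProduct_self_lt [Fintype n] {v : n → ℝ}
    (hv : v ∈ intVectors n ⊔ Submodule.span ℤ {fun _ => 1 / 2})
    (hlt : 4 * (v ⬝ᵥ v) < Fintype.card n) : v ∈ intVectors n := by
  obtain ⟨y, hy, _, hz, hyz⟩ := Submodule.mem_sup.1 hv
  obtain ⟨a, rfl⟩ := Submodule.mem_span_singleton.1 hz
  choose c hc using mem_intVectors.1 hy
  have hcoord : ∀ i, 2 * v i = ((2 * c i + a : ℤ) : ℝ) := fun i => by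
    rw [← hyz, Pi.add_apply, Pi.smul_apply, ← hc, zsmul_eq_mul]
    push_cast
    ring
  obtain ⟨b, rfl | rfl⟩ := Int.even_or_odd' a
  · refine mem_intVectors.2 fun i => ⟨c i + b, ?_⟩
    have := hcoord i
    push_cast at this ⊢
    linarith
  · refine absurd hlt (not_lt.2 ?_)
    calc (Fintype.card n : ℝ) = ∑ _i : n, (1 : ℝ) := by simp
      _ ≤ ∑ i, (2 * v i) ^ 2 := Finset.sum_le_sum fun i _ => by
        rw [hcoord]
        exact one_le_sq_intCast_of_odd ⟨c i + b, by ring⟩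
      _ = 4 * (v ⬝ᵥ v) := by
        simp only [dotProduct, Finset.mul_sum]
        ring_nf

lemma matrixLattice_milnorBasisMatrix_le (n : ℕ) :
    matrixLattice (milnorBasisMatrix n) ≤
      intVectors (Fin n) ⊔ Submodule.span ℤ {fun _ => 1 / 2} := by
  refine Submodule.span_le.2 ?_
  rintro _ ⟨j, rfl⟩
  by_cases hj : (j : ℕ) = n - 1
  · refine Submodule.mem_sup_right (Submodule.subset_span ?_)
    ext i
    simp [milnorBasisMatrix, hj]
  · refine Submodule.mem_sup_left (mem_intVectors.2 fun i => ?_)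
    simp only [col_apply, milnorBasisMatrix, of_apply, if_neg hj]
    split_ifs
    exacts [⟨2, by norm_num⟩, ⟨1, by norm_num⟩, ⟨-1, by norm_num⟩, ⟨0, by norm_num⟩]

lemma rootSpan_matrixLattice_milnorBasisMatrix_le {n : ℕ} (hn : 8 < n) :
    rootSpan (matrixLattice (milnorBasisMatrix n)) ≤ intVectors (Fin n) :=
  Submodule.span_le.2 fun _ ⟨hv, hv2⟩ =>
    mem_intVectors_of_four_mul_dotProduct_self_lt (matrixLattice_milnorBasisMatrix_le n hv) <| by
      rw [hv2, Fintype.card_fin]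
      exact_mod_cast (by omega : 4 * 2 < n)

theorem not_isRootGenerated_matrixLattice_milnorBasisMatrix {n : ℕ} (hn : 8 < n) :
    ¬ IsRootGenerated (matrixLattice (milnorBasisMatrix n)) := fun h => by
  have hhalf : (milnorBasisMatrix n).col ⟨n - 1, by omega⟩ ∈ intVectors (Fin n) :=
    rootSpan_matrixLattice_milnorBasisMatrix_le hn (h (Submodule.subset_span ⟨_, rfl⟩))
  obtain ⟨z, hz⟩ := mem_intVectors.1 hhalf ⟨0, by omega⟩
  simp only [col_apply, milnorBasisMatrix, of_apply, ↓reduceIte] at hz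
  have : 2 * z = 1 := by exact_mod_cast (by linarith : (2 * z : ℝ) = 1)
  omega

lemma milnorBasisMatrix_eight_col_dotProduct_self {j : Fin 8} (hj : j ≠ 0) :
    (milnorBasisMatrix 8).col j ⬝ᵥ (milnorBasisMatrix 8).col j = 2 := by
  fin_cases j
  · exact absurd rfl hj
  all_goals norm_num [dotProduct, Fin.sum_univ_succ, milnorBasisMatrix]

lemma milnorBasisMatrix_eight_col_zero_add_col_one :
    ((milnorBasisMatrix 8).col 0 + (milnorBasisMatrix 8).col 1) ⬝ᵥ
      ((milnorBasisMatrix 8).col 0 + (milnorBasisMatrix 8).col 1) = 2 := by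
  norm_num [dotProduct, Fin.sum_univ_succ, milnorBasisMatrix]

lemma isRootGenerated_matrixLattice_milnorBasisMatrix_eight :
    IsRootGenerated (matrixLattice (milnorBasisMatrix 8)) := by
  set A := milnorBasisMatrix 8
  have hcol : ∀ j, A.col j ∈ matrixLattice A := fun j => Submodule.subset_span ⟨j, rfl⟩
  have hroot : ∀ v ∈ matrixLattice A, v ⬝ᵥ v = 2 → v ∈ rootSpan (matrixLattice A) :=
    fun v hv h2 => Submodule.subset_span ⟨hv, h2⟩
  refine Submodule.span_le.2 ?_
  rintro _ ⟨j, rfl⟩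
  by_cases hj : j = 0
  · subst hj
    -- The first column `2e₀` has norm 4, but it is the difference of the roots `e₀ + e₁` and
    -- `e₁ - e₀`.
    rw [← add_sub_cancel_right (A.col 0) (A.col 1)]
    exact sub_mem
      (hroot _ (add_mem (hcol 0) (hcol 1)) milnorBasisMatrix_eight_col_zero_add_col_one)
      (hroot _ (hcol 1) (milnorBasisMatrix_eight_col_dotProduct_self one_ne_zero))
  · exact hroot _ (hcol j) (milnorBasisMatrix_eight_col_dotProduct_self hj)

lemma isRootGenerated_matrixLattice_milnorBasisMatrix8x8 :
    IsRootGenerated (matrixLattice milnorBasisMatrix8x8) :=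
  (isRootGenerated_matrixLattice_milnorBasisMatrix_eight.fromBlocks
    isRootGenerated_matrixLattice_milnorBasisMatrix_eight).reindex _

/-- The lattices `E₁₆ = A₁₆·ℤ¹⁶` and `E₈ × E₈ = A₈ₓ₈·ℤ¹⁶` are not congruent:
there is no orthogonal matrix `B` carrying one lattice onto the other.
Consequently the associated flat tori are not isometric. -/
theorem milnor_lattices_not_congruent :
    ¬ ∃ B : Matrix (Fin 16) (Fin 16) ℝ, B.transpose * B = 1 ∧
      (fun v : Fin 16 → ℝ => B.mulVec v) ''
          {v | ∃ m : Fin 16 → ℤ, v = (milnorBasisMatrix 16).mulVec (fun j => (m j : ℝ))}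
        = {v | ∃ m : Fin 16 → ℤ, v = milnorBasisMatrix8x8.mulVec (fun j => (m j : ℝ))} := by
  rintro ⟨B, hB, himg⟩
  rw [← coe_matrixLattice, ← coe_matrixLattice] at himg
  exact not_isRootGenerated_matrixLattice_milnorBasisMatrix (by norm_num)
    (isRootGenerated_matrixLattice_milnorBasisMatrix8x8.of_image_mulVec hB himg)
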